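/- Reduction of the simulated Darwinism state: in ℂ² ⊗ (ℂ²)^{⊗N}, let |Ψ⟩ = α |0⟩ ⊗ |0⟩^{⊗N} + β |1⟩ ⊗ (⊗_{i=1}^N |θ_i⟩), where |θ_i⟩ = cos(θ_i/2)|0⟩ + sin(θ_i/2)|1⟩ and |α|² + |β|² = 1. Then for every n with 1 ≤ n ≤ N−1, tracing out the first n environment qubits gives tr_{1,…,n} |Ψ⟩⟨Ψ| = |α|² |0⟩⟨0| ⊗ ⊗_{i=n+1}^N |0⟩⟨0| + |β|² |1⟩⟨1| ⊗ ⊗_{i=n+1}^N |θ_i⟩⟨θ_i| + (α β̄ ∏_{i=1}^n cos(θ_i/2)) |0⟩⟨1| ⊗ ⊗_{i=n+1}^N |0⟩⟨θ_i| + (ᾱ β ∏_{i=1}^n cos(θ_i/2)) |1⟩⟨0| ⊗ ⊗_{i=n+1}^N |θ_i⟩⟨0|. In particular, if θ_i = π for all i, the coherent cross terms vanish and the remaining environmental states |0⟩ and |θ_i⟩ are orthogonal, so the reduction is a Spectrum Broadcast Structure. -/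

import Mathlib

open scoped Kronecker Matrix ComplexOrder BigOperators
open Matrix

noncomputable section

/-- The rank-one operator `|v⟩⟨w| = v wᴴ`. -/
def ketBra {n : Type*} (v w : n → ℂ) : Matrix n n ℂ := Matrix.vecMulVec v (star w)

/-- A density matrix: positive semidefinite with unit trace. -/
def IsDensityMatrix {n : Type*} [Fintype n] (ρ : Matrix n n ℂ) : Prop :=
  ρ.PosSemidef ∧ ρ.trace = 1

/-- An orthonormal family of vectors. -/
def OrthonormalFamily {n I : Type*} [Fintype n] [DecidableEq I] (e : I → n → ℂ) : Prop :=
  ∀ i j, star (e i) ⬝ᵥ e j = (if i = j then 1 else 0)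

/-- The basis vector `|0⟩` of a qubit. -/
def ket0 : Fin 2 → ℂ := fun i => if i = 0 then 1 else 0

/-- The basis vector `|1⟩` of a qubit. -/
def ket1 : Fin 2 → ℂ := fun i => if i = 1 then 1 else 0

/-- The qubit state `|θ⟩ = cos(θ/2)|0⟩ + sin(θ/2)|1⟩`. -/
def ketTheta (t : ℝ) : Fin 2 → ℂ :=
  fun i => if i = 0 then (Real.cos (t / 2) : ℂ) else (Real.sin (t / 2) : ℂ)

/-- The simulated Darwinism state
`|Ψ⟩ = α|0⟩ ⊗ |0⟩^{⊗N} + β|1⟩ ⊗ (⊗ᵢ |θᵢ⟩)`. -/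
def psiState (N : ℕ) (α β : ℂ) (θ : Fin N → ℝ) :
    (Fin 2 × ((l : Fin N) → Fin 2)) → ℂ :=
  fun p => α * ket0 p.1 * ∏ i, ket0 (p.2 i) + β * ket1 p.1 * ∏ i, ketTheta (θ i) (p.2 i)

/-- Partial trace over the first `n` environment qubits. -/
def traceHead {N : ℕ} (n : ℕ) (hn : n ≤ N)
    (M : Matrix (Fin 2 × ((l : Fin N) → Fin 2)) (Fin 2 × ((l : Fin N) → Fin 2)) ℂ) :
    Matrix (Fin 2 × ((l : Fin (N - n)) → Fin 2)) (Fin 2 × ((l : Fin (N - n)) → Fin 2)) ℂ :=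
  fun p q => ∑ c : Fin n → Fin 2,
    M (p.1, fun k => if h : (k : ℕ) < n then c ⟨k, h⟩
        else p.2 ⟨(k : ℕ) - n, by have := k.isLt; omega⟩)
      (q.1, fun k => if h : (k : ℕ) < n then c ⟨k, h⟩
        else q.2 ⟨(k : ℕ) - n, by have := k.isLt; omega⟩)

/-! Expanding `|Ψ⟩⟨Ψ|` gives four operators of the form `|a ⊗ f⟩⟨b ⊗ g|` with `f`, `g` product
vectors on the environment. Tracing out the first `n` environment qubits of such an operator
multiplies its untraced part by `∏ₖ ⟨gₖ|fₖ⟩`, and the overlaps are `⟨0|0⟩ = ⟨θ|θ⟩ = 1` and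
`⟨0|θ⟩ = ⟨θ|0⟩ = cos (θ/2)`, which vanishes at `θ = π`. -/

section KetBra

variable {ι : Type*}

lemma ketBra_add_left (v v' w : ι → ℂ) : ketBra (v + v') w = ketBra v w + ketBra v' w :=
  add_vecMulVec v v' (star w)

lemma ketBra_add_right (v w w' : ι → ℂ) : ketBra v (w + w') = ketBra v w + ketBra v w' := by
  rw [ketBra, star_add, vecMulVec_add]; rfl

lemma ketBra_smul_smul (a b : ℂ) (v w : ι → ℂ) :
    ketBra (a • v) (b • w) = (a * star b) • ketBra v w := by
  rw [ketBra, star_smul, smul_vecMulVec, vecMulVec_smul, smul_smul]; rfl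

end KetBra

lemma ket0_dotProduct_ket0 : star ket0 ⬝ᵥ ket0 = 1 := by
  simp [dotProduct, ket0]

lemma ketTheta_dotProduct_ketTheta (t : ℝ) : star (ketTheta t) ⬝ᵥ ketTheta t = 1 := by
  simp only [dotProduct, Fin.sum_univ_two, ketTheta, Pi.star_apply, Complex.star_def,
    Complex.conj_ofReal, if_pos, Fin.one_eq_zero_iff, OfNat.ofNat_ne_one, if_false]
  rw [← sq, ← sq]
  exact_mod_cast Real.cos_sq_add_sin_sq (t / 2)

lemma ket0_dotProduct_ketTheta (t : ℝ) : star ket0 ⬝ᵥ ketTheta t = Real.cos (t / 2) := by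
  simp [dotProduct, ket0, ketTheta]

lemma ketTheta_dotProduct_ket0 (t : ℝ) : star (ketTheta t) ⬝ᵥ ket0 = Real.cos (t / 2) := by
  simp [dotProduct, ket0, ketTheta, -Complex.ofReal_cos]

lemma ket0_dotProduct_ketTheta_pi : star ket0 ⬝ᵥ ketTheta Real.pi = 0 := by
  rw [ket0_dotProduct_ketTheta, Real.cos_pi_div_two, Complex.ofReal_zero]

lemma Fin.prod_dite_lt {M α : Type*} [CommMonoid M] {N n : ℕ} (hn : n ≤ N)
    (F : Fin N → α → M) (c : Fin n → α) (b : Fin (N - n) → α) :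
    ∏ i : Fin N, F i (if h : (i : ℕ) < n then c ⟨i, h⟩ else b ⟨i - n, by omega⟩) =
      (∏ k : Fin n, F ⟨k, by omega⟩ (c k)) *
        ∏ j : Fin (N - n), F ⟨n + j, by omega⟩ (b j) := by
  rw [← Fin.prod_congr' _ (Nat.add_sub_cancel' hn), Fin.prod_univ_add]
  congr 1 <;> refine Finset.prod_congr rfl fun i _ => ?_ <;> simp <;> rfl

lemma sum_prod_mul_star_prod {ι α : Type*} [Fintype ι] [DecidableEq ι] [Fintype α]
    (u v : ι → α → ℂ) :
    ∑ c : ι → α, (∏ k, u k (c k)) * star (∏ k, v k (c k)) = ∏ k, star (v k) ⬝ᵥ u k := by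
  simp only [dotProduct, Pi.star_apply, Fintype.prod_sum, star_prod,
    ← Finset.prod_mul_distrib, mul_comm]

def tensorKet {m : ℕ} (f : Fin m → Fin 2 → ℂ) : (Fin m → Fin 2) → ℂ :=
  fun b => ∏ j, f j (b j)

def productKet {N : ℕ} (a : Fin 2 → ℂ) (f : Fin N → Fin 2 → ℂ) :
    Fin 2 × (Fin N → Fin 2) → ℂ :=
  fun p => a p.1 * tensorKet f p.2

lemma psiState_eq_add_productKet (N : ℕ) (α β : ℂ) (θ : Fin N → ℝ) :
    psiState N α β θ =
      α • productKet ket0 (fun _ => ket0) + β • productKet ket1 (fun i => ketTheta (θ i)) := by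
  ext p
  simp only [psiState, productKet, tensorKet, Pi.add_apply, Pi.smul_apply, smul_eq_mul,
    mul_assoc]

section traceHead

variable {N : ℕ} (n : ℕ) (hn : n ≤ N)

lemma traceHead_add (M M' : Matrix (Fin 2 × (Fin N → Fin 2)) (Fin 2 × (Fin N → Fin 2)) ℂ) :
    traceHead n hn (M + M') = traceHead n hn M + traceHead n hn M' := by
  ext p q
  simp only [traceHead, Matrix.add_apply, Finset.sum_add_distrib]

lemma traceHead_smul (z : ℂ)
    (M : Matrix (Fin 2 × (Fin N → Fin 2)) (Fin 2 × (Fin N → Fin 2)) ℂ) :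
    traceHead n hn (z • M) = z • traceHead n hn M := by
  ext p q
  simp only [traceHead, Matrix.smul_apply, smul_eq_mul, Finset.mul_sum]

lemma traceHead_ketBra_productKet (a b : Fin 2 → ℂ) (f g : Fin N → Fin 2 → ℂ) :
    traceHead n hn (ketBra (productKet a f) (productKet b g)) =
      (∏ k : Fin n, star (g ⟨k, by omega⟩) ⬝ᵥ f ⟨k, by omega⟩) •
        (ketBra a b ⊗ₖ ketBra (tensorKet fun j : Fin (N - n) => f ⟨n + j, by omega⟩)
          (tensorKet fun j : Fin (N - n) => g ⟨n + j, by omega⟩)) := by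
  ext ⟨p, p'⟩ ⟨q, q'⟩
  simp only [traceHead, ketBra, productKet, tensorKet, vecMulVec_apply, Pi.star_apply,
    Fin.prod_dite_lt hn, Matrix.smul_apply, kroneckerMap_apply, smul_eq_mul, star_mul']
  rw [← sum_prod_mul_star_prod, Finset.sum_mul]
  exact Finset.sum_congr rfl fun c _ => by ring

lemma traceHead_ketBra_psiState (α β : ℂ) (θ : Fin N → ℝ) :
    traceHead n hn (ketBra (psiState N α β θ) (psiState N α β θ)) =
      (α * star α) • (ketBra ket0 ket0 ⊗ₖ
          ketBra (tensorKet fun _ : Fin (N - n) => ket0) (tensorKet fun _ => ket0)) +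
        (β * star β) • (ketBra ket1 ket1 ⊗ₖ
          ketBra (tensorKet fun j : Fin (N - n) => ketTheta (θ ⟨n + j, by omega⟩))
            (tensorKet fun j : Fin (N - n) => ketTheta (θ ⟨n + j, by omega⟩))) +
        (α * star β * ∏ i : Fin n, (Real.cos (θ ⟨i, by omega⟩ / 2) : ℂ)) •
          (ketBra ket0 ket1 ⊗ₖ ketBra (tensorKet fun _ : Fin (N - n) => ket0)
            (tensorKet fun j : Fin (N - n) => ketTheta (θ ⟨n + j, by omega⟩))) +
        (star α * β * ∏ i : Fin n, (Real.cos (θ ⟨i, by omega⟩ / 2) : ℂ)) •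
          (ketBra ket1 ket0 ⊗ₖ
            ketBra (tensorKet fun j : Fin (N - n) => ketTheta (θ ⟨n + j, by omega⟩))
              (tensorKet fun _ : Fin (N - n) => ket0)) := by
  simp only [psiState_eq_add_productKet, ketBra_add_left, ketBra_add_right, ketBra_smul_smul,
    traceHead_add, traceHead_smul, traceHead_ketBra_productKet, ket0_dotProduct_ket0,
    ketTheta_dotProduct_ketTheta, ket0_dotProduct_ketTheta, ketTheta_dotProduct_ket0,
    Finset.prod_const_one, one_smul, smul_smul]
  rw [mul_comm β (star α)]
  abel

end traceHead

/-- Reduction of the simulated Darwinism state: tracing out the first `n` environment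
qubits leaves the displayed combination of diagonal and cross terms; if all `θᵢ = π`
the cross terms vanish and the remaining environmental states are orthogonal, so the
reduction is a Spectrum Broadcast Structure. -/
theorem stmt_19 (N n : ℕ) (h1 : 1 ≤ n) (h2 : n ≤ N - 1)
    (α β : ℂ)
    (θ : Fin N → ℝ) :
    traceHead n (by omega) (ketBra (psiState N α β θ) (psiState N α β θ)) =
      (α * star α) • (ketBra ket0 ket0 ⊗ₖ
        ketBra (fun b : (l : Fin (N - n)) → Fin 2 => ∏ j, ket0 (b j))
               (fun b : (l : Fin (N - n)) → Fin 2 => ∏ j, ket0 (b j))) +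
      (β * star β) • (ketBra ket1 ket1 ⊗ₖ
        ketBra (fun b : (l : Fin (N - n)) → Fin 2 =>
                  ∏ j : Fin (N - n), ketTheta (θ ⟨n + (j : ℕ), by have := j.isLt; omega⟩) (b j))
               (fun b : (l : Fin (N - n)) → Fin 2 =>
                  ∏ j : Fin (N - n), ketTheta (θ ⟨n + (j : ℕ), by have := j.isLt; omega⟩) (b j))) +
      (α * star β * ∏ i : Fin n, (Real.cos (θ ⟨i, by have := i.isLt; omega⟩ / 2) : ℂ)) •
        (ketBra ket0 ket1 ⊗ₖ
          ketBra (fun b : (l : Fin (N - n)) → Fin 2 => ∏ j, ket0 (b j))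
                 (fun b : (l : Fin (N - n)) → Fin 2 =>
                    ∏ j : Fin (N - n), ketTheta (θ ⟨n + (j : ℕ), by have := j.isLt; omega⟩) (b j))) +
      (star α * β * ∏ i : Fin n, (Real.cos (θ ⟨i, by have := i.isLt; omega⟩ / 2) : ℂ)) •
        (ketBra ket1 ket0 ⊗ₖ
          ketBra (fun b : (l : Fin (N - n)) → Fin 2 =>
                    ∏ j : Fin (N - n), ketTheta (θ ⟨n + (j : ℕ), by have := j.isLt; omega⟩) (b j))
                 (fun b : (l : Fin (N - n)) → Fin 2 => ∏ j, ket0 (b j))) ∧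
    ((∀ i, θ i = Real.pi) →
      (traceHead n (by omega) (ketBra (psiState N α β θ) (psiState N α β θ)) =
        (α * star α) • (ketBra ket0 ket0 ⊗ₖ
          ketBra (fun b : (l : Fin (N - n)) → Fin 2 => ∏ j, ket0 (b j))
                 (fun b : (l : Fin (N - n)) → Fin 2 => ∏ j, ket0 (b j))) +
        (β * star β) • (ketBra ket1 ket1 ⊗ₖ
          ketBra (fun b : (l : Fin (N - n)) → Fin 2 =>
                    ∏ j : Fin (N - n), ketTheta (θ ⟨n + (j : ℕ), by have := j.isLt; omega⟩) (b j))
                 (fun b : (l : Fin (N - n)) → Fin 2 =>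
                    ∏ j : Fin (N - n), ketTheta (θ ⟨n + (j : ℕ), by have := j.isLt; omega⟩) (b j)))) ∧
      ∀ i, star ket0 ⬝ᵥ ketTheta (θ i) = 0) := by
  rw [traceHead_ketBra_psiState]
  refine ⟨rfl, fun hπ => ⟨?_, fun i => by rw [hπ]; exact ket0_dotProduct_ketTheta_pi⟩⟩
  have hcos : ∏ i : Fin n, (Real.cos (θ ⟨i, by omega⟩ / 2) : ℂ) = 0 :=
    Finset.prod_eq_zero (Finset.mem_univ ⟨0, h1⟩) (by simp [hπ])
  rw [hcos, mul_zero, mul_zero, zero_smul, zero_smul, add_zero, add_zero]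
  rfl
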